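/- Let S and T be left cancellative monoids and let S × T be their direct product monoid. Then S × T is strongly C*-regular if and only if both S and T are strongly C*-regular. -/

import Mathlib

open scoped Classical

namespace SgC

variable {M : Type*}

/-- Composition of partial maps (`g` after `f`). -/
def pcomp (g f : M → Option M) : M → Option M := fun s => (f s).bind g

/-- The canonical partial inverse of a partial map (the genuine inverse when the map
is injective on its domain, as is the case for all maps in the left inverse hull of a
left cancellative monoid). -/
noncomputable def pinv (f : M → Option M) : M → Option M :=
  fun t => if h : ∃ s, f s = some t then some h.choose else none

/-- Left translation `t ↦ s * t` as an everywhere-defined partial map. -/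
def ptransl [Mul M] (s : M) : M → Option M := fun t => some (s * t)

/-- The identity partial map. -/
def pid : M → Option M := fun s => some s

/-- The block `q⁻¹ ∘ p`: first multiply on the left by `p`, then remove `q` on the left. -/
noncomputable def pblock [Mul M] (p : M × M) : M → Option M :=
  pcomp (pinv (ptransl p.2)) (ptransl p.1)

/-- Membership in the left inverse hull `I_ℓ(M)`: `h` is of the form
`s₂ₙ⁻¹ s₂ₙ₋₁ ⋯ s₂⁻¹ s₁` for some `n ≥ 1` and `sᵢ ∈ M` (the list records the pairs
`(s₁,s₂), (s₃,s₄), …`, applied left to right). -/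
def InInvHull [Mul M] (h : M → Option M) : Prop :=
  ∃ l : List (M × M), l ≠ [] ∧
    h = l.foldl (fun acc p => pcomp (pblock p) acc) pid

/-- Membership in the inverse hull generated by translations by elements of `σ` only
(used for canonical copies of `I_ℓ(S)` inside partial maps of a larger monoid). -/
def InInvHullOn [Mul M] (σ : Set M) (h : M → Option M) : Prop :=
  ∃ l : List (M × M), l ≠ [] ∧ (∀ p ∈ l, p.1 ∈ σ ∧ p.2 ∈ σ) ∧
    h = l.foldl (fun acc p => pcomp (pblock p) acc) pid

/-- Domain of a partial map. -/
def pdom (h : M → Option M) : Set M := {s | h s ≠ none}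

/-- `h` fixes the set `Y` pointwise (in particular `Y ⊆ dom h`). -/
def PFixes (h : M → Option M) (Y : Set M) : Prop := ∀ s ∈ Y, h s = some s

/-- Preimage of a set under a partial map. -/
def ppre (h : M → Option M) (X : Set M) : Set M := {s | ∃ x ∈ X, h s = some x}

/-- Constructible right ideals: domains of elements of the left inverse hull. -/
def IsConstructible [Mul M] (X : Set M) : Prop := ∃ h, InInvHull h ∧ X = pdom h

/-- Membership in `J̄(S)`: sets of the form `X₀` or `X₀ ∖ (X₁ ∪ ⋯ ∪ Xₘ)` with all
`Xᵢ` constructible. -/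
def IsConstructibleBar [Mul M] (X : Set M) : Prop :=
  ∃ (X₀ : Set M) (m : ℕ) (Xi : Fin m → Set M),
    IsConstructible X₀ ∧ (∀ i, IsConstructible (Xi i)) ∧ X = X₀ \ ⋃ i, Xi i

/-- `Xi` is a foundation family for `X`: each `Xi i ⊆ X` and every nonempty
constructible right ideal contained in `X` intersects some `Xi i`. -/
def IsFoundation [Mul M] (X : Set M) {ι : Type*} (Xi : ι → Set M) : Prop :=
  (∀ i, Xi i ⊆ X) ∧
  ∀ Y : Set M, IsConstructible Y → Y.Nonempty → Y ⊆ X → ∃ i, (Y ∩ Xi i).Nonempty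

/-- Strong C*-regularity. -/
def StronglyRegular (M : Type*) [Monoid M] : Prop :=
  ∀ (n : ℕ) (h : Fin n → M → Option M), (∀ k, InInvHull (h k)) →
  ∀ (m : ℕ) (X : Set M) (Xi : Fin m → Set M),
    IsConstructible X → (∀ i, IsConstructible (Xi i)) →
    (X \ ⋃ i, Xi i).Nonempty →
    (X \ ⋃ i, Xi i) ⊆ ⋃ k, {s | h k s = some s} →
    ∃ (l : ℕ) (Y : Fin l → Set M) (kk : Fin l → Fin n),
      (∀ j, IsConstructible (Y j)) ∧
      (X \ ⋃ i, Xi i) ⊆ ⋃ j, Y j ∧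
      ∀ j, PFixes (h (kk j)) (Y j)

/-- C*-regularity. -/
def Regular (M : Type*) [Monoid M] : Prop :=
  ∀ (n : ℕ) (h : Fin n → M → Option M), (∀ k, InInvHull (h k)) →
  ∀ X : Set M, IsConstructibleBar X → X.Nonempty →
    X ⊆ ⋃ k, {s | h k s = some s} →
    ∃ (l : ℕ) (Y : Fin l → Set M) (kk : Fin l → Fin n),
      (∀ j, IsConstructibleBar (Y j)) ∧ X ⊆ ⋃ j, Y j ∧
      ∀ j, PFixes (h (kk j)) (Y j)

/-- Strong C*-regularity on the boundary. -/
def StronglyRegularOnBoundary (M : Type*) [Monoid M] : Prop :=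
  ∀ (n : ℕ) (h : Fin n → M → Option M), (∀ k, InInvHull (h k)) →
  ∀ (m : ℕ) (X : Set M) (Xi : Fin m → Set M),
    IsConstructible X → (∀ i, IsConstructible (Xi i)) → (∀ i, Xi i ⊆ X) →
    (X \ ⋃ i, Xi i).Nonempty →
    (X \ ⋃ i, Xi i) ⊆ ⋃ k, {s | h k s = some s} →
    ∃ (l : ℕ) (Y : Fin l → Set M) (kk : Fin l → Fin n),
      (∀ j, IsConstructible (Y j)) ∧ (∀ j, PFixes (h (kk j)) (Y j)) ∧
      IsFoundation X (Sum.elim Xi Y)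

/-- C*-regularity on the boundary. -/
def RegularOnBoundary (M : Type*) [Monoid M] : Prop :=
  ∀ (n : ℕ) (h : Fin n → M → Option M), (∀ k, InInvHull (h k)) →
  ∀ (m : ℕ) (X : Set M) (Xi : Fin m → Set M),
    IsConstructible X → (∀ i, IsConstructible (Xi i)) → (∀ i, Xi i ⊆ X) →
    (X \ ⋃ i, Xi i).Nonempty →
    (X \ ⋃ i, Xi i) ⊆ ⋃ k, {s | h k s = some s} →
    ∃ (l : ℕ) (Y : Fin l → Set M) (kk : Fin l → Fin n),
      (∀ j, IsConstructibleBar (Y j)) ∧ (∀ j, PFixes (h (kk j)) (Y j)) ∧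
      IsFoundation X (Sum.elim Xi Y)

/-- The type of constructible right ideals `J(M)`. -/
def CIdeal (M : Type*) [Mul M] : Type _ := {X : Set M // IsConstructible X}

/-- The character space `{0,1}^{J(M)}` with the topology of pointwise convergence. -/
abbrev CharSpace (M : Type*) [Mul M] : Type _ := CIdeal M → Bool

/-- The principal character `χ_s`. -/
noncomputable def princhar [Mul M] (s : M) : CharSpace M :=
  fun X => decide (s ∈ X.1)

/-- `Ω(M)`: the closure of the set of principal characters. -/
noncomputable def Omega (M : Type*) [Mul M] : Set (CharSpace M) :=
  closure (Set.range (princhar : M → CharSpace M))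

/-- Filters on `J(M)`: nonempty collections of nonempty constructible ideals closed
under intersections and enlargements within `J(M)`. -/
def IsFilterOn [Mul M] (F : Set (CIdeal M)) : Prop :=
  F.Nonempty ∧ (∀ X ∈ F, (X.1 : Set M).Nonempty) ∧
  (∀ X ∈ F, ∀ Y ∈ F, ∀ Z : CIdeal M, Z.1 = X.1 ∩ Y.1 → Z ∈ F) ∧
  (∀ X ∈ F, ∀ Y : CIdeal M, X.1 ⊆ Y.1 → Y ∈ F)

/-- Nonzero multiplicative `{0,1}`-valued maps on `J(M)`. -/
def IsChar [Mul M] (χ : CharSpace M) : Prop :=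
  (∃ X, χ X = true) ∧
  ∀ X Y Z : CIdeal M, Z.1 = X.1 ∩ Y.1 → χ Z = (χ X && χ Y)

/-- Maximal characters: characters whose associated filter is maximal among filters. -/
def IsMaximalChar [Mul M] (χ : CharSpace M) : Prop :=
  IsChar χ ∧ IsFilterOn {X | χ X = true} ∧
  ∀ G : Set (CIdeal M), IsFilterOn G → {X | χ X = true} ⊆ G → G = {X | χ X = true}

/-- The set of maximal characters `Ω_max(M)`. -/
def OmegaMax (M : Type*) [Mul M] : Set (CharSpace M) := {χ | IsMaximalChar χ}

/-- The boundary `∂Ω(M)`: the closure of the set of maximal characters. -/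
noncomputable def BoundaryOmega (M : Type*) [Mul M] : Set (CharSpace M) :=
  closure (OmegaMax M)

/-!
Every block `(q₁, q₂)⁻¹ (p₁, p₂)` of a word in `I_ℓ(S × T)` acts coordinatewise, so `I_ℓ(S × T)`
consists of the products `f × g` with `f ∈ I_ℓ(S)`, `g ∈ I_ℓ(T)`, and `J(S × T)` of the products
`A × B` with `A ∈ J(S)`, `B ∈ J(T)`.

A covering problem for `S` becomes one for `S × T` after taking products with `T` and `id_T`;
projecting a solution to the first coordinate solves the original problem.

Conversely, `(A₀ × B₀) ∖ ⋃ᵢ (Aᵢ × Bᵢ)` is the union over `J ⊆ {1, …, m}` of the rectangles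
`(A₀ ∖ ⋃_{i ∉ J} Aᵢ) × (B₀ ∖ ⋃_{i ∈ J} Bᵢ)`, so it suffices to cover a rectangle `W × E` each point
of which is fixed by some `f_k × g_k`. Strong regularity of `S` gives, for each set `K` of indices
with `W ⊆ ⋃_{k ∈ K} Fix f_k`, a cover of `W` by ideals fixed by some `f_k`, `k ∈ K`; let `𝒞` be the
union of these finitely many covers. For `s ∈ W` let `Λ` be the set of `k` such that `f_k` fixes
an ideal of `𝒞` containing `s`. For `t ∈ E` the set `K = {k | g_k t = t}` is one of the above, so
it meets `Λ`: the `g_k` with `k ∈ Λ` fix all of `E`. A cover of `E` by ideals fixed by some `g_k`,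
`k ∈ Λ`, paired with the matching ideals of `𝒞` around `s`, covers `(s, t)` by a product ideal
fixed by some `f_k × g_k`, and only finitely many such products occur.
-/

section InverseHull

def pfix (h : M → Option M) : Set M := {s | h s = some s}

noncomputable def blockStep [Mul M] (acc : M → Option M) (p : M × M) : M → Option M :=
  pcomp (pblock p) acc

lemma inInvHull_iff [Mul M] {h : M → Option M} :
    InInvHull h ↔ ∃ l : List (M × M), l ≠ [] ∧ h = l.foldl blockStep pid :=
  Iff.rfl

@[simp] lemma pcomp_pid (f : M → Option M) : pcomp pid f = f := by
  funext s; exact Option.bind_fun_some (f s)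

@[simp] lemma pdom_pid : pdom (pid : M → Option M) = Set.univ := by
  ext s; simp [pdom, pid]

lemma pinv_ptransl_eq_some [Mul M] [IsLeftCancelMul M] {b t u : M} :
    pinv (ptransl b) t = some u ↔ b * u = t := by
  unfold pinv
  split_ifs with h
  · rw [Option.some_inj]
    have hc : b * h.choose = t := Option.some_inj.1 h.choose_spec
    exact ⟨fun hu => hu ▸ hc, fun hu => mul_left_cancel (hc.trans hu.symm)⟩
  · exact ⟨nofun, fun hu => (h ⟨u, congrArg some hu⟩).elim⟩

lemma pblock_eq_some [Mul M] [IsLeftCancelMul M] {a b s u : M} :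
    pblock (a, b) s = some u ↔ b * u = a * s :=
  pinv_ptransl_eq_some

lemma pblock_one [Monoid M] [IsLeftCancelMul M] : pblock ((1 : M), (1 : M)) = pid := by
  funext s
  refine Option.ext fun u => ?_
  rw [pblock_eq_some, one_mul, one_mul, pid, Option.some_inj, eq_comm]

lemma foldl_blockStep_replicate_one [Monoid M] [IsLeftCancelMul M] (n : ℕ)
    (acc : M → Option M) : (List.replicate n ((1 : M), (1 : M))).foldl blockStep acc = acc := by
  induction n with
  | zero => rfl
  | succ n ih => rw [List.replicate_succ, List.foldl_cons, blockStep, pblock_one, pcomp_pid, ih]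

lemma inInvHull_pid [Monoid M] [IsLeftCancelMul M] : InInvHull (pid : M → Option M) :=
  ⟨List.replicate 1 (1, 1), by simp, (foldl_blockStep_replicate_one 1 _).symm⟩

lemma isConstructible_univ [Monoid M] [IsLeftCancelMul M] :
    IsConstructible (Set.univ : Set M) :=
  ⟨pid, inInvHull_pid, pdom_pid.symm⟩

end InverseHull

section ProductHull

variable {S T : Type*}

def pprod (f : S → Option S) (g : T → Option T) : S × T → Option (S × T) :=
  fun x => (f x.1).bind fun s => (g x.2).map fun t => (s, t)

lemma pprod_eq_some {f : S → Option S} {g : T → Option T} {x y : S × T} :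
    pprod f g x = some y ↔ f x.1 = some y.1 ∧ g x.2 = some y.2 := by
  cases hf : f x.1 <;> cases hg : g x.2 <;> simp [pprod, hf, hg, Prod.ext_iff, eq_comm]

lemma pdom_pprod (f : S → Option S) (g : T → Option T) :
    pdom (pprod f g) = pdom f ×ˢ pdom g := by
  ext x
  cases hf : f x.1 <;> cases hg : g x.2 <;> simp [pdom, pprod, hf, hg]

lemma pcomp_pprod (f₁ g₁ : S → Option S) (f₂ g₂ : T → Option T) :
    pcomp (pprod g₁ g₂) (pprod f₁ f₂) = pprod (pcomp g₁ f₁) (pcomp g₂ f₂) := by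
  funext x
  cases hf : f₁ x.1 <;> cases hg : f₂ x.2 <;> simp [pprod, pcomp, hf, hg]

lemma pprod_pid_pid : pprod (pid : S → Option S) (pid : T → Option T) = pid := rfl

section LeftCancel

variable [Mul S] [Mul T] [IsLeftCancelMul S] [IsLeftCancelMul T]

lemma pblock_prod (p : (S × T) × (S × T)) :
    pblock p = pprod (pblock (p.1.1, p.2.1)) (pblock (p.1.2, p.2.2)) := by
  obtain ⟨⟨a₁, a₂⟩, b₁, b₂⟩ := p
  funext x
  refine Option.ext fun y => ?_
  rw [pprod_eq_some, pblock_eq_some, pblock_eq_some, pblock_eq_some, Prod.ext_iff]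
  rfl

lemma foldl_blockStep_pprod (l : List ((S × T) × (S × T))) (f : S → Option S)
    (g : T → Option T) :
    l.foldl blockStep (pprod f g) = pprod ((l.map fun p => (p.1.1, p.2.1)).foldl blockStep f)
      ((l.map fun p => (p.1.2, p.2.2)).foldl blockStep g) := by
  induction l generalizing f g with
  | nil => rfl
  | cons p l ih =>
    rw [List.foldl_cons, blockStep, pblock_prod, pcomp_pprod, ih]
    rfl

lemma InInvHull.exists_pprod {h : S × T → Option (S × T)} (hh : InInvHull h) :
    ∃ f g, InInvHull f ∧ InInvHull g ∧ h = pprod f g := by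
  obtain ⟨l, hl, rfl⟩ := inInvHull_iff.1 hh
  exact ⟨_, _, ⟨_, by simpa using hl, rfl⟩, ⟨_, by simpa using hl, rfl⟩,
    foldl_blockStep_pprod l pid pid⟩

lemma IsConstructible.exists_prod {X : Set (S × T)} (hX : IsConstructible X) :
    ∃ A B, IsConstructible A ∧ IsConstructible B ∧ X = A ×ˢ B := by
  obtain ⟨h, hh, rfl⟩ := hX
  obtain ⟨f, g, hf, hg, rfl⟩ := hh.exists_pprod
  exact ⟨_, _, ⟨f, hf, rfl⟩, ⟨g, hg, rfl⟩, pdom_pprod f g⟩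

end LeftCancel

variable [Monoid S] [Monoid T] [IsLeftCancelMul S] [IsLeftCancelMul T]

/-- The word of `f` followed by the word of `g`, each padded with trivial blocks `(1, 1)` in the
other coordinate. -/
lemma InInvHull.prod {f : S → Option S} {g : T → Option T} (hf : InInvHull f)
    (hg : InInvHull g) : InInvHull (pprod f g) := by
  obtain ⟨l₁, hl₁, rfl⟩ := inInvHull_iff.1 hf
  obtain ⟨l₂, -, rfl⟩ := inInvHull_iff.1 hg
  refine inInvHull_iff.2
    ⟨l₁.map (fun p => ((p.1, 1), (p.2, 1))) ++ l₂.map (fun q => ((1, q.1), (1, q.2))),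
      by simp [hl₁], ?_⟩
  rw [← pprod_pid_pid, foldl_blockStep_pprod]
  simp only [List.map_append, List.map_map, Function.comp_def, List.map_id', List.map_const',
    List.foldl_append, foldl_blockStep_replicate_one]

lemma IsConstructible.prod {A : Set S} {B : Set T} (hA : IsConstructible A)
    (hB : IsConstructible B) : IsConstructible (A ×ˢ B) := by
  obtain ⟨f, hf, rfl⟩ := hA
  obtain ⟨g, hg, rfl⟩ := hB
  exact ⟨_, hf.prod hg, (pdom_pprod f g).symm⟩

end ProductHull

section Covers

variable {ι : Type*}

def FixCovered [Mul M] (h : ι → M → Option M) (K : Set ι) (D : Set M) : Prop :=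
  ∃ C : Set (Set M), C.Finite ∧ (∀ Y ∈ C, IsConstructible Y ∧ ∃ k ∈ K, PFixes (h k) Y) ∧
    D ⊆ ⋃₀ C

lemma FixCovered.iUnion [Mul M] {ι' : Type*} [Finite ι'] {h : ι → M → Option M} {K : Set ι}
    {D : ι' → Set M} (hD : ∀ j, FixCovered h K (D j)) : FixCovered h K (⋃ j, D j) := by
  choose C hCfin hC hDC using hD
  refine ⟨⋃ j, C j, Set.finite_iUnion hCfin, fun Y hY => ?_, ?_⟩
  · obtain ⟨j, hYj⟩ := Set.mem_iUnion.1 hY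
    exact hC j Y hYj
  · rw [Set.sUnion_iUnion]
    exact Set.iUnion_mono hDC

lemma FixCovered.image_fst {S T : Type*} [Mul S] [Mul T] [IsLeftCancelMul S]
    [IsLeftCancelMul T]
    {f : ι → S → Option S} {g : ι → T → Option T} {K : Set ι} {D : Set (S × T)}
    (hD : FixCovered (fun k => pprod (f k) (g k)) K D) : FixCovered f K (Prod.fst '' D) := by
  obtain ⟨C, hCfin, hC, hDC⟩ := hD
  refine ⟨Set.image Prod.fst '' {Y ∈ C | Y.Nonempty}, (hCfin.sep _).image _, ?_, ?_⟩
  · rintro _ ⟨Y, ⟨hYC, hYne⟩, rfl⟩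
    obtain ⟨hY, k, hk, hfix⟩ := hC Y hYC
    obtain ⟨A, B, hA, -, rfl⟩ := hY.exists_prod
    refine ⟨by rwa [Set.fst_image_prod _ (Set.prod_nonempty_iff.1 hYne).2], k, hk, ?_⟩
    rintro _ ⟨x, hx, rfl⟩
    exact (pprod_eq_some.1 (hfix x hx)).1
  · rintro _ ⟨x, hx, rfl⟩
    obtain ⟨Y, hYC, hxY⟩ := hDC hx
    exact ⟨_, ⟨Y, ⟨hYC, x, hxY⟩, rfl⟩, x, hxY, rfl⟩

lemma FixCovered.image_snd {S T : Type*} [Mul S] [Mul T] [IsLeftCancelMul S]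
    [IsLeftCancelMul T]
    {f : ι → S → Option S} {g : ι → T → Option T} {K : Set ι} {D : Set (S × T)}
    (hD : FixCovered (fun k => pprod (f k) (g k)) K D) : FixCovered g K (Prod.snd '' D) := by
  obtain ⟨C, hCfin, hC, hDC⟩ := hD
  refine ⟨Set.image Prod.snd '' {Y ∈ C | Y.Nonempty}, (hCfin.sep _).image _, ?_, ?_⟩
  · rintro _ ⟨Y, ⟨hYC, hYne⟩, rfl⟩
    obtain ⟨hY, k, hk, hfix⟩ := hC Y hYC
    obtain ⟨A, B, -, hB, rfl⟩ := hY.exists_prod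
    refine ⟨by rwa [Set.snd_image_prod (Set.prod_nonempty_iff.1 hYne).1], k, hk, ?_⟩
    rintro _ ⟨x, hx, rfl⟩
    exact (pprod_eq_some.1 (hfix x hx)).2
  · rintro _ ⟨x, hx, rfl⟩
    obtain ⟨Y, hYC, hxY⟩ := hDC hx
    exact ⟨_, ⟨Y, ⟨hYC, x, hxY⟩, rfl⟩, x, hxY, rfl⟩

lemma exists_finite_forall_fixCovered [Mul M] [Finite ι] {h : ι → M → Option M} {W : Set M}
    (hW : ∀ K : Set ι, W ⊆ ⋃ k ∈ K, pfix (h k) → FixCovered h K W) :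
    ∃ C : Set (Set M), C.Finite ∧ (∀ Y ∈ C, IsConstructible Y) ∧
      ∀ K : Set ι, W ⊆ ⋃ k ∈ K, pfix (h k) →
        ∀ s ∈ W, ∃ Y ∈ C, s ∈ Y ∧ ∃ k ∈ K, PFixes (h k) Y := by
  choose C hCfin hC hWC using fun K : {K : Set ι // W ⊆ ⋃ k ∈ K, pfix (h k)} => hW K K.2
  refine ⟨⋃ K, C K, Set.finite_iUnion hCfin, fun Y hY => ?_, fun K hK s hs => ?_⟩
  · obtain ⟨K, hYK⟩ := Set.mem_iUnion.1 hY
    exact (hC K Y hYK).1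
  · obtain ⟨Y, hY, hsY⟩ := hWC ⟨K, hK⟩ hs
    exact ⟨Y, Set.mem_iUnion.2 ⟨⟨K, hK⟩, hY⟩, hsY, (hC _ Y hY).2⟩

lemma FixCovered.prod {S T : Type*} [Monoid S] [Monoid T] [IsLeftCancelMul S]
    [IsLeftCancelMul T] [Finite ι] {f : ι → S → Option S} {g : ι → T → Option T}
    {W : Set S} {E : Set T}
    (hW : ∀ K : Set ι, W ⊆ ⋃ k ∈ K, pfix (f k) → FixCovered f K W)
    (hE : ∀ K : Set ι, E ⊆ ⋃ k ∈ K, pfix (g k) → FixCovered g K E)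
    (hWE : ∀ s ∈ W, ∀ t ∈ E, ∃ k, s ∈ pfix (f k) ∧ t ∈ pfix (g k)) :
    FixCovered (fun k => pprod (f k) (g k)) Set.univ (W ×ˢ E) := by
  obtain ⟨C, hCfin, hC, hWC⟩ := exists_finite_forall_fixCovered hW
  obtain ⟨D, hDfin, hD, hED⟩ := exists_finite_forall_fixCovered hE
  refine ⟨{Z | ∃ P ∈ C, ∃ Q ∈ D, (∃ k, PFixes (f k) P ∧ PFixes (g k) Q) ∧ Z = P ×ˢ Q},
    ((hCfin.prod hDfin).image fun PQ => PQ.1 ×ˢ PQ.2).subset ?_, ?_, ?_⟩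
  · rintro _ ⟨P, hP, Q, hQ, -, rfl⟩
    exact ⟨(P, Q), ⟨hP, hQ⟩, rfl⟩
  · rintro _ ⟨P, hP, Q, hQ, ⟨k, hfP, hgQ⟩, rfl⟩
    exact ⟨(hC P hP).prod (hD Q hQ), k, Set.mem_univ k, fun x hx =>
      pprod_eq_some.2 ⟨hfP x.1 hx.1, hgQ x.2 hx.2⟩⟩
  rintro ⟨s, t⟩ ⟨hs, ht⟩
  set Λ := {k | ∃ P ∈ C, s ∈ P ∧ PFixes (f k) P}
  have hEΛ : E ⊆ ⋃ k ∈ Λ, pfix (g k) := by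
    intro t' ht'
    have hWt' : W ⊆ ⋃ k ∈ {k | t' ∈ pfix (g k)}, pfix (f k) := fun s' hs' => by
      obtain ⟨k, hs'k, ht'k⟩ := hWE s' hs' t' ht'
      exact Set.mem_biUnion ht'k hs'k
    obtain ⟨P, hP, hsP, k, ht'k, hfP⟩ := hWC _ hWt' s hs
    exact Set.mem_biUnion ⟨P, hP, hsP, hfP⟩ ht'k
  obtain ⟨Q, hQ, htQ, k, ⟨P, hP, hsP, hfP⟩, hgQ⟩ := hED Λ hEΛ t ht
  exact ⟨P ×ˢ Q, ⟨P, hP, Q, hQ, ⟨k, hfP, hgQ⟩, rfl⟩, hsP, htQ⟩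

end Covers

section Regularity

variable [Monoid M]

lemma StronglyRegular.fixCovered (HM : StronglyRegular M) {ι ι' : Type*} [Finite ι']
    {h : ι → M → Option M} (hh : ∀ k, InInvHull (h k)) {K : Set ι} (hK : K.Finite)
    {X : Set M} {Xi : ι' → Set M} (hX : IsConstructible X) (hXi : ∀ i, IsConstructible (Xi i))
    (hcov : X \ ⋃ i, Xi i ⊆ ⋃ k ∈ K, pfix (h k)) : FixCovered h K (X \ ⋃ i, Xi i) := by
  rcases (X \ ⋃ i, Xi i).eq_empty_or_nonempty with hD | hD
  · exact ⟨∅, Set.finite_empty, by simp, by simp [hD]⟩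
  have := hK.to_subtype
  let eK := Finite.equivFin K
  let eX := Finite.equivFin ι'
  have hXi' : ⋃ j, Xi (eX.symm j) = ⋃ i, Xi i := eX.symm.surjective.iUnion_comp Xi
  have hK' : ⋃ j, pfix (h (eK.symm j)) = ⋃ k ∈ K, pfix (h k) := by
    rw [eK.symm.surjective.iUnion_comp (fun k : K => pfix (h k)), Set.biUnion_eq_iUnion]
  obtain ⟨l, Y, kk, hY, hDY, hYfix⟩ := HM _ (fun j => h (eK.symm j)) (fun j => hh _) _ X
    (fun j => Xi (eX.symm j)) hX (fun j => hXi _) (hXi' ▸ hD) (hXi' ▸ hK' ▸ hcov)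
  refine ⟨Set.range Y, Set.finite_range Y, Set.forall_mem_range.2 fun j =>
    ⟨hY j, _, (eK.symm (kk j)).2, hYfix j⟩, ?_⟩
  rwa [Set.sUnion_range, ← hXi']

lemma stronglyRegular_of_fixCovered
    (H : ∀ (n : ℕ) (h : Fin n → M → Option M), (∀ k, InInvHull (h k)) →
      ∀ (m : ℕ) (X : Set M) (Xi : Fin m → Set M), IsConstructible X →
        (∀ i, IsConstructible (Xi i)) → X \ ⋃ i, Xi i ⊆ ⋃ k, pfix (h k) →
          FixCovered h Set.univ (X \ ⋃ i, Xi i)) :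
    StronglyRegular M := by
  intro n h hh m X Xi hX hXi _ hcov
  obtain ⟨C, hCfin, hC, hDC⟩ := H n h hh m X Xi hX hXi hcov
  obtain ⟨l, Y, -, rfl⟩ := hCfin.fin_param
  choose hY kk _ hYfix using fun j => hC (Y j) (Set.mem_range_self j)
  exact ⟨l, Y, kk, hY, by rwa [Set.sUnion_range] at hDC, hYfix⟩

end Regularity

lemma prod_diff_iUnion_prod {α β ι : Type*} (A₀ : Set α) (B₀ : Set β) (A : ι → Set α)
    (B : ι → Set β) :
    A₀ ×ˢ B₀ \ ⋃ i, A i ×ˢ B i =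
      ⋃ J : Set ι, (A₀ \ ⋃ i : ↥Jᶜ, A i) ×ˢ (B₀ \ ⋃ i : ↥J, B i) := by
  ext ⟨s, t⟩
  simp only [Set.mem_sdiff, Set.mem_prod, Set.mem_iUnion, Subtype.exists, Set.mem_compl_iff,
    not_exists, not_and]
  constructor
  · rintro ⟨⟨hs, ht⟩, hst⟩
    exact ⟨{i | s ∈ A i}, ⟨hs, fun i hi => hi⟩, ⟨ht, fun i hi => hst i hi⟩⟩
  · rintro ⟨J, ⟨hs, hsJ⟩, ⟨ht, htJ⟩⟩
    exact ⟨⟨hs, ht⟩, fun i hsi hti => if hi : i ∈ J then htJ i hi hti else hsJ i hi hsi⟩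

section StronglyRegularProduct

variable {S T : Type*} [Monoid S] [Monoid T] [IsLeftCancelMul S] [IsLeftCancelMul T]

lemma StronglyRegular.of_prod_left (HP : StronglyRegular (S × T)) : StronglyRegular S := by
  refine stronglyRegular_of_fixCovered fun n h hh m X Xi hX hXi hcov => ?_
  have hD : X ×ˢ Set.univ \ ⋃ i, Xi i ×ˢ Set.univ = (X \ ⋃ i, Xi i) ×ˢ (Set.univ : Set T) := by
    rw [← Set.iUnion_prod_const, Set.prod_sdiff_prod]
    simp
  have hcov' :
      (X \ ⋃ i, Xi i) ×ˢ Set.univ ⊆ ⋃ k ∈ Set.univ, pfix (pprod (h k) (pid : T → _)) := by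
    rintro ⟨s, t⟩ ⟨hs, -⟩
    obtain ⟨k, hk⟩ := Set.mem_iUnion.1 (hcov hs)
    exact Set.mem_biUnion (Set.mem_univ k) (pprod_eq_some.2 ⟨hk, rfl⟩)
  have hprod := HP.fixCovered (fun k => (hh k).prod inInvHull_pid) Set.finite_univ
    (hX.prod isConstructible_univ) (fun i => (hXi i).prod isConstructible_univ) (hD ▸ hcov')
  simpa [hD, Set.fst_image_prod _ Set.univ_nonempty] using hprod.image_fst

lemma StronglyRegular.of_prod_right (HP : StronglyRegular (S × T)) : StronglyRegular T := by
  refine stronglyRegular_of_fixCovered fun n h hh m X Xi hX hXi hcov => ?_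
  have hD : Set.univ ×ˢ X \ ⋃ i, Set.univ ×ˢ Xi i = (Set.univ : Set S) ×ˢ (X \ ⋃ i, Xi i) := by
    rw [← Set.prod_iUnion, Set.prod_sdiff_prod]
    simp
  have hcov' :
      Set.univ ×ˢ (X \ ⋃ i, Xi i) ⊆ ⋃ k ∈ Set.univ, pfix (pprod (pid : S → _) (h k)) := by
    rintro ⟨s, t⟩ ⟨-, ht⟩
    obtain ⟨k, hk⟩ := Set.mem_iUnion.1 (hcov ht)
    exact Set.mem_biUnion (Set.mem_univ k) (pprod_eq_some.2 ⟨rfl, hk⟩)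
  have hprod := HP.fixCovered (fun k => inInvHull_pid.prod (hh k)) Set.finite_univ
    (isConstructible_univ.prod hX) (fun i => isConstructible_univ.prod (hXi i)) (hD ▸ hcov')
  simpa [hD, Set.snd_image_prod Set.univ_nonempty] using hprod.image_snd

lemma StronglyRegular.prod (HS : StronglyRegular S) (HT : StronglyRegular T) :
    StronglyRegular (S × T) := by
  refine stronglyRegular_of_fixCovered fun n h hh m X Xi hX hXi hcov => ?_
  choose f g hf hg hfg using fun k => (hh k).exists_pprod
  obtain rfl : h = fun k => pprod (f k) (g k) := funext hfg
  choose A B hA hB hAB using fun i => (hXi i).exists_prod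
  obtain rfl : Xi = fun i => A i ×ˢ B i := funext hAB
  obtain ⟨A₀, B₀, hA₀, hB₀, rfl⟩ := hX.exists_prod
  rw [prod_diff_iUnion_prod] at hcov ⊢
  refine FixCovered.iUnion fun J => FixCovered.prod
    (fun K hK => HS.fixCovered hf K.toFinite hA₀ (fun i => hA i) hK)
    (fun K hK => HT.fixCovered hg K.toFinite hB₀ (fun i => hB i) hK) fun s hs t ht => ?_
  obtain ⟨k, hk⟩ := Set.mem_iUnion.1 (hcov (Set.mem_iUnion.2 ⟨J, Set.mk_mem_prod hs ht⟩))
  exact ⟨k, pprod_eq_some.1 hk⟩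

end StronglyRegularProduct

/-- The direct product of two left cancellative monoids is strongly
C*-regular if and only if both factors are. -/
theorem cstar_stmt5 {S T : Type*} [Monoid S] [Monoid T]
    [IsLeftCancelMul S] [IsLeftCancelMul T] :
    StronglyRegular (S × T) ↔ (StronglyRegular S ∧ StronglyRegular T) :=
  ⟨fun HP => ⟨HP.of_prod_left, HP.of_prod_right⟩, fun ⟨HS, HT⟩ => HS.prod HT⟩

end SgC
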